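/- For all integers N ≥ 1 and n ≥ 1, C(N+n, N)^{−1} = ∑_{k=1}^{n} (−1)^k ∑_{i_1+⋯+i_k=n, i_1,…,i_k ≥ 1} (n!/(i_1!⋯i_k!)) · B_{N,i_1} ⋯ B_{N,i_k}, where the inner sum is over all compositions of n into k positive parts and C(a,b) denotes the binomial coefficient. -/

import Mathlib

/-!
Write `F = hgSeries N` and `G = F⁻¹`, so `G` has constant coefficient `1` and
`F = 1 / (1 - (1 - G)) = ∑ₖ (-1)ᵏ (G - 1)ᵏ`. Since `G - 1` has no constant term, only
`k ≤ n` contribute to the `n`-th coefficient, and the `n`-th coefficient of `(G - 1)ᵏ` is the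
sum over compositions of `n` into `k` positive parts of products of coefficients of `G`.
Finally `n! · coeff n F = n! N! / (N + n)! = C(N + n, N)⁻¹` and `coeff i G = B_{N,i} / i!`.
-/

/-- The power series ∑_{i≥0} (N!/(N+i)!) xⁱ over ℚ. -/
noncomputable def hgSeries (N : ℕ) : PowerSeries ℚ :=
  PowerSeries.mk fun i => (N.factorial : ℚ) / ((N + i).factorial : ℚ)

/-- The hypergeometric Bernoulli number `B_{N,n}`, defined so that
`∑ (B_{N,n}/n!) xⁿ` is the multiplicative inverse of `hgSeries N` in ℚ[[x]]. -/
noncomputable def hB (N n : ℕ) : ℚ :=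
  (n.factorial : ℚ) * PowerSeries.coeff n (hgSeries N)⁻¹

open PowerSeries Finset

namespace PowerSeries

variable {R : Type*}

theorem coeff_pow_eq_sum_antidiagonalTuple [CommSemiring R] (φ : R⟦X⟧) (k n : ℕ) :
    coeff n (φ ^ k) = ∑ i ∈ Nat.antidiagonalTuple k n, ∏ j, coeff (i j) φ := by
  rw [← Fin.prod_const, coeff_prod]
  refine sum_nbij' (fun l => ⇑l) (fun i => Finsupp.equivFunOnFinite.symm i) ?_ ?_ ?_ ?_ ?_
  · intro l hl
    simp only [mem_finsuppAntidiag] at hl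
    simp [Nat.mem_antidiagonalTuple, ← hl.1]
  · intro i hi
    simp only [Nat.mem_antidiagonalTuple] at hi
    simp [mem_finsuppAntidiag, ← hi]
  · intro l _; ext j; simp
  · intro i _; ext j; simp
  · intro l _; rfl

theorem coeff_pow_eq_sum_antidiagonalTuple_pos [CommSemiring R] {φ : R⟦X⟧}
    (hφ : constantCoeff φ = 0) (k n : ℕ) :
    coeff n (φ ^ k) =
      ∑ i ∈ (Nat.antidiagonalTuple k n).filter (fun i => ∀ j, 1 ≤ i j), ∏ j, coeff (i j) φ := by
  rw [coeff_pow_eq_sum_antidiagonalTuple, sum_filter_of_ne]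
  intro i _ hne j
  by_contra! hj
  refine hne (prod_eq_zero (mem_univ j) ?_)
  rw [Nat.lt_one_iff.mp hj, coeff_zero_eq_constantCoeff, hφ]

theorem coeff_eq_sum_range_of_mul_eq_one [CommRing R] {f g : R⟦X⟧} (hfg : f * g = 1)
    (hg : constantCoeff g = 1) (n : ℕ) :
    coeff n f = ∑ k ∈ range (n + 1), (-1) ^ k * coeff n ((g - 1) ^ k) := by
  have hgeom : f = ∑ k ∈ range (n + 1), (1 - g) ^ k + f * (1 - g) ^ (n + 1) := by
    linear_combination f * geom_sum_mul (1 - g) (n + 1) +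
      (∑ k ∈ range (n + 1), (1 - g) ^ k) * hfg
  have htail : coeff n (f * (1 - g) ^ (n + 1)) = 0 := by
    have hX : X ∣ 1 - g := X_dvd_iff.mpr (by simp [hg])
    exact X_pow_dvd_iff.mp ((pow_dvd_pow_of_dvd hX _).mul_left f) n n.lt_succ_self
  rw [hgeom, map_add, htail, add_zero, map_sum]
  refine sum_congr rfl fun k _ => ?_
  rw [← neg_sub, neg_eq_neg_one_mul, mul_pow, ← map_one C, ← map_neg, ← map_pow, coeff_C_mul]

theorem coeff_eq_sum_compositions_of_mul_eq_one [CommRing R] {f g : R⟦X⟧} (hfg : f * g = 1)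
    (hg : constantCoeff g = 1) (n : ℕ) :
    coeff n f = ∑ k ∈ range (n + 1), (-1) ^ k *
      ∑ i ∈ (Nat.antidiagonalTuple k n).filter (fun i => ∀ j, 1 ≤ i j), ∏ j, coeff (i j) g := by
  rw [coeff_eq_sum_range_of_mul_eq_one hfg hg]
  refine sum_congr rfl fun k _ => ?_
  rw [coeff_pow_eq_sum_antidiagonalTuple_pos (by simp [hg])]
  congr 1
  refine sum_congr rfl fun i hi => prod_congr rfl fun j _ => ?_
  have hij : i j ≠ 0 := Nat.one_le_iff_ne_zero.mp ((mem_filter.mp hi).2 j)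
  simp [coeff_one, hij]

end PowerSeries

theorem coeff_hgSeries (N n : ℕ) :
    coeff n (hgSeries N) = (N.factorial : ℚ) / ((N + n).factorial : ℚ) := by
  simp [hgSeries]

theorem constantCoeff_hgSeries (N : ℕ) : constantCoeff (hgSeries N) = 1 := by
  rw [← coeff_zero_eq_constantCoeff_apply, coeff_hgSeries, add_zero,
    div_self (by positivity)]

theorem coeff_inv_hgSeries (N n : ℕ) :
    coeff n (hgSeries N)⁻¹ = hB N n / (n.factorial : ℚ) := by
  rw [hB, mul_div_cancel_left₀ _ (by positivity)]

theorem inv_choose_add_eq_factorial_mul_coeff_hgSeries (N n : ℕ) :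
    (((N + n).choose N : ℚ))⁻¹ = (n.factorial : ℚ) * coeff n (hgSeries N) := by
  rw [coeff_hgSeries, Nat.cast_choose ℚ (Nat.le_add_right N n), Nat.add_sub_cancel_left]
  field_simp

theorem stmt2_general (N n : ℕ) (hn : 1 ≤ n) :
    (((N + n).choose N : ℚ))⁻¹ = ∑ k ∈ Finset.Icc 1 n, (-1 : ℚ) ^ k *
      ∑ i ∈ (Finset.Nat.antidiagonalTuple k n).filter (fun i => ∀ j, 1 ≤ i j),
        ((n.factorial : ℚ) / ∏ j, ((i j).factorial : ℚ)) * ∏ j, hB N (i j) := by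
  have hinv : hgSeries N * (hgSeries N)⁻¹ = 1 :=
    PowerSeries.mul_inv_cancel _ (by simp [constantCoeff_hgSeries])
  have hempty : Nat.antidiagonalTuple 0 n = ∅ := by
    obtain ⟨m, rfl⟩ := Nat.exists_eq_add_of_le' hn
    exact Nat.antidiagonalTuple_zero_succ m
  rw [inv_choose_add_eq_factorial_mul_coeff_hgSeries,
    coeff_eq_sum_compositions_of_mul_eq_one hinv (by simp [constantCoeff_hgSeries]),
    range_eq_Ico, sum_eq_sum_Ico_succ_bot (by omega), Ico_add_one_right_eq_Icc, hempty,
    filter_empty, sum_empty, mul_zero, zero_add, mul_sum]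
  refine sum_congr rfl fun k _ => ?_
  simp only [coeff_inv_hgSeries, prod_div_distrib, mul_left_comm _ ((-1 : ℚ) ^ k), mul_sum]
  exact sum_congr rfl fun i _ => by ring

theorem stmt2 (N n : ℕ) (hN : 1 ≤ N) (hn : 1 ≤ n) :
    (((N + n).choose N : ℚ))⁻¹ = ∑ k ∈ Finset.Icc 1 n, (-1 : ℚ) ^ k *
      ∑ i ∈ (Finset.Nat.antidiagonalTuple k n).filter (fun i => ∀ j, 1 ≤ i j),
        ((n.factorial : ℚ) / ∏ j, ((i j).factorial : ℚ)) * ∏ j, hB N (i j) :=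
  stmt2_general N n hn
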